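/- Let l be an association list of (key × β) pairs whose key list is prefix-free and strictly increasing in the lexicographic order, let k be a key that does not occur among the keys of l and such that {k} together with the keys of l is prefix-free, and let v : β. Then there exists exactly one association list l' whose key list is prefix-free and strictly increasing in the lexicographic order such that lookup(l', k) = Some v and lookup(l', k') = lookup(l, k') for every key k' ≠ k. -/

import Mathlib

/-- A side is `L` or `R`. -/
inductive Side : Type
  | L | R
deriving DecidableEq, Repr

/-- A key is a list of sides. -/
abbrev Key := List Side

/-- The strict order `L < R` on sides. -/
def Side.lt : Side → Side → Prop := fun a b => a = Side.L ∧ b = Side.R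

/-- The strict lexicographic order on keys induced by `L < R`. -/
def keyLt : Key → Key → Prop := List.Lex Side.lt

/-- A list of keys is prefix-free: for any two distinct keys in it,
neither is a prefix of the other. -/
def PrefixFreeList (ks : List Key) : Prop :=
  List.Pairwise (fun a b => ¬ a <+: b ∧ ¬ b <+: a) ks

/-- A set of keys is prefix-free. -/
def PrefixFreeSet (S : Set Key) : Prop :=
  ∀ a ∈ S, ∀ b ∈ S, a ≠ b → ¬ a <+: b

/-- A list of keys is strictly increasing in the lexicographic order. -/
def SortedKeys (ks : List Key) : Prop := List.Pairwise keyLt ks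

/-- Key list of an association list is prefix-free and strictly increasing. -/
def GoodKeyList (ks : List Key) : Prop := PrefixFreeList ks ∧ SortedKeys ks

/-- Prepend the key `s` to the key of every entry. -/
def prependAll {β : Type _} (s : Key) (l : List (Key × β)) : List (Key × β) :=
  l.map (fun e => (s ++ e.1, e.2))

/-- `lookup l k` is `some` of the value of the first entry of `l` with key `k`. -/
def lookupA {β : Type _} (l : List (Key × β)) (k : Key) : Option β :=
  (l.find? (fun e => decide (e.1 = k))).map Prod.snd

/-!
Once the keys of an association list are distinct, `lookupA` determines the list up to
permutation, and a list strictly sorted by keys is determined by its set of entries. So the only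
candidate is the sorted insertion of `(k, v)` into `l`; it is strictly sorted because `k` is fresh,
and prefix-free because its keys are distinct elements of a prefix-free set.
-/

instance : IsStrictTotalOrder Side Side.lt where
  trichotomous a b := by cases a <;> cases b <;> simp [Side.lt]
  irrefl a := by cases a <;> simp [Side.lt]
  trans a b c := by cases a <;> cases b <;> cases c <;> simp [Side.lt]

instance : DecidableRel Side.lt := fun a b => inferInstanceAs (Decidable (a = _ ∧ b = _))

-- With this order `<` on `Side` is `Side.lt`, so `keyLt` is Mathlib's lexicographic `<` on `Key`.
instance : LinearOrder Side := linearOrderOfSTO Side.lt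

theorem sortedKeys_iff_pairwise_lt {ks : List Key} : SortedKeys ks ↔ ks.Pairwise (· < ·) :=
  Iff.rfl

theorem SortedKeys.nodup {ks : List Key} (h : SortedKeys ks) : ks.Nodup :=
  (sortedKeys_iff_pairwise_lt.1 h).nodup

theorem List.Pairwise.orderedInsert_lt {α : Type*} [LinearOrder α] {l : List α} {a : α}
    (hl : l.Pairwise (· < ·)) (ha : a ∉ l) : (l.orderedInsert (· ≤ ·) a).Pairwise (· < ·) := by
  have hnd : (l.orderedInsert (· ≤ ·) a).Nodup :=
    (perm_orderedInsert _ a l).nodup_iff.2 (nodup_cons.2 ⟨ha, hl.nodup⟩)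
  exact (((hl.imp le_of_lt).orderedInsert a l).and hnd).imp fun h => lt_of_le_of_ne h.1 h.2

theorem prefixFreeList_of_nodup {S : Set Key} {ks : List Key} (hS : PrefixFreeSet S)
    (hks : ∀ x ∈ ks, x ∈ S) (hnd : ks.Nodup) : PrefixFreeList ks :=
  hnd.imp_of_mem fun ha hb hab =>
    ⟨hS _ (hks _ ha) _ (hks _ hb) hab, hS _ (hks _ hb) _ (hks _ ha) hab.symm⟩

section Lookup

variable {β : Type*}

@[simp]
theorem lookupA_cons (e : Key × β) (t : List (Key × β)) (k : Key) :
    lookupA (e :: t) k = if e.1 = k then some e.2 else lookupA t k := by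
  by_cases h : e.1 = k <;> simp [lookupA, h]

theorem lookupA_eq_some_iff {l : List (Key × β)} (hl : (l.map Prod.fst).Nodup) {k : Key} {v : β} :
    lookupA l k = some v ↔ (k, v) ∈ l := by
  induction l with
  | nil => simp [lookupA]
  | cons e t ih =>
    rw [List.map_cons, List.nodup_cons] at hl
    by_cases h : e.1 = k
    · subst h
      have : (e.1, v) ∉ t := fun hmem => hl.1 (List.mem_map.2 ⟨_, hmem, rfl⟩)
      simp [this, Prod.ext_iff, eq_comm]
    · simp [h, ih hl.2, Prod.ext_iff, Ne.symm h]

theorem List.Perm.lookupA_eq {l₁ l₂ : List (Key × β)} (hp : l₁.Perm l₂)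
    (hl₁ : (l₁.map Prod.fst).Nodup) (k : Key) : lookupA l₁ k = lookupA l₂ k := by
  have hl₂ := (hp.map Prod.fst).nodup_iff.1 hl₁
  exact Option.ext fun v => by rw [lookupA_eq_some_iff hl₁, lookupA_eq_some_iff hl₂, hp.mem_iff]

theorem eq_of_lookupA_eq {l₁ l₂ : List (Key × β)} (hl₁ : SortedKeys (l₁.map Prod.fst))
    (hl₂ : SortedKeys (l₂.map Prod.fst)) (h : ∀ k, lookupA l₁ k = lookupA l₂ k) : l₁ = l₂ := by
  rw [sortedKeys_iff_pairwise_lt] at hl₁ hl₂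
  have : Std.Irrefl fun a b : Key × β => a.1 < b.1 := ⟨fun a => lt_irrefl a.1⟩
  have : Std.Antisymm fun a b : Key × β => a.1 < b.1 := ⟨fun _ _ h h' => (lt_asymm h h').elim⟩
  refine (List.pairwise_map.1 hl₁).eq_of_mem_iff (List.pairwise_map.1 hl₂) fun ⟨k, v⟩ => ?_
  rw [← lookupA_eq_some_iff hl₁.nodup, ← lookupA_eq_some_iff hl₂.nodup, h]

theorem forall_lookupA_eq_cons_iff {l l' : List (Key × β)} {k : Key} {v : β} :
    (∀ k', lookupA l' k' = lookupA ((k, v) :: l) k') ↔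
      lookupA l' k = some v ∧ ∀ k', k' ≠ k → lookupA l' k' = lookupA l k' := by
  refine ⟨fun h => ⟨by simp [h], fun k' hk' => by simp [h, Ne.symm hk']⟩, fun ⟨hk, hne⟩ k' => ?_⟩
  by_cases h : k' = k
  · simp [h, hk]
  · simp [hne k' h, Ne.symm h]

end Lookup

/-- given an association list `l` with a prefix-free, strictly
lexicographically increasing key list, a fresh key `k` such that `{k}` together
with the keys of `l` is prefix-free, and a value `v`, there is exactly one
association list `l'` with a prefix-free, strictly increasing key list whose
lookup extends that of `l` by `{k ↦ v}`. -/
theorem stmt12 {β : Type} (l : List (Key × β)) (k : Key) (v : β)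
    (hl : GoodKeyList (l.map Prod.fst))
    (hk : k ∉ l.map Prod.fst)
    (hpf : PrefixFreeSet (insert k {x : Key | x ∈ l.map Prod.fst})) :
    ∃! l' : List (Key × β),
      GoodKeyList (l'.map Prod.fst) ∧
      lookupA l' k = some v ∧
      ∀ k' : Key, k' ≠ k → lookupA l' k' = lookupA l k' := by
  obtain ⟨-, hsorted⟩ := hl
  let l' := l.orderedInsert (fun a b => a.1 ≤ b.1) (k, v)
  have hkeys : l'.map Prod.fst = (l.map Prod.fst).orderedInsert (· ≤ ·) k :=
    List.map_orderedInsert _ _ _ _ _ (fun _ _ => Iff.rfl) (fun _ _ => Iff.rfl)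
  have hsorted' : SortedKeys (l'.map Prod.fst) := hkeys ▸ hsorted.orderedInsert_lt hk
  have hlookup : ∀ k', lookupA l' k' = lookupA ((k, v) :: l) k' :=
    (List.perm_orderedInsert _ _ l).lookupA_eq hsorted'.nodup
  refine ⟨l', ⟨⟨?_, hsorted'⟩, forall_lookupA_eq_cons_iff.1 hlookup⟩, ?_⟩
  · exact prefixFreeList_of_nodup hpf (fun x hx => (List.mem_orderedInsert _).1 (hkeys ▸ hx))
      hsorted'.nodup
  · rintro l'' ⟨⟨-, hsorted''⟩, hspec''⟩
    refine eq_of_lookupA_eq hsorted'' hsorted' fun k' => ?_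
    rw [forall_lookupA_eq_cons_iff.2 hspec'', hlookup]
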